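/- Let X and Y be real-valued random variables on a probability space with |X| ≤ C₁ and |Y| ≤ C₂ almost surely, where X is measurable with respect to a σ-field 𝒜 and Y with respect to a σ-field ℬ. If α := sup{|P(A ∩ B) − P(A)P(B)| : A ∈ 𝒜, B ∈ ℬ} satisfies α ≤ ε, then |E(XY) − E(X)E(Y)| ≤ 4 C₁ C₂ ε. -/

import Mathlib

/-!
Conditioning on `𝒜` gives `Cov(X, Y) = E[X (E[Y|𝒜] - EY)]`, so `|Cov(X, Y)| ≤ C₁ E|E[Y|𝒜] - EY|`,
and this `L¹` distance equals `Cov(ξ, Y)` for the `𝒜`-measurable sign `ξ = ±1` of `E[Y|𝒜] - EY`.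
Running the same argument on `Cov(Y, ξ)` with `ℬ` replaces `Y` by a `ℬ`-measurable sign `η` at the
cost of `C₂`. Finally `ξ = 2·1_A - 1` and `η = 2·1_B - 1`, so `Cov(ξ, η) = 4 (P(A ∩ B) - P(A) P(B))`.
-/

open MeasureTheory ProbabilityTheory Filter

section

variable {Ω : Type*}

noncomputable def signIndicator (S : Set Ω) : Ω → ℝ := fun ω => 2 * S.indicator 1 ω - 1

lemma abs_signIndicator_le_one (S : Set Ω) (ω : Ω) : |signIndicator S ω| ≤ 1 := by
  by_cases hω : ω ∈ S <;> norm_num [signIndicator, hω]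

lemma signIndicator_mul_self_eq_abs (f : Ω → ℝ) (ω : Ω) :
    signIndicator {ω | 0 ≤ f ω} ω * f ω = |f ω| := by
  by_cases hω : 0 ≤ f ω
  · norm_num [signIndicator, hω, abs_of_nonneg hω]
  · norm_num [signIndicator, hω, abs_of_neg (not_le.mp hω)]

variable {mΩ : MeasurableSpace Ω} {μ : Measure Ω}

lemma measurable_signIndicator {S : Set Ω} (hS : MeasurableSet S) :
    Measurable (signIndicator S) :=
  ((measurable_const.indicator hS).const_mul 2).sub_const 1

lemma aestronglyMeasurable_signIndicator {S : Set Ω} (hS : NullMeasurableSet S μ) :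
    AEStronglyMeasurable (signIndicator S) μ :=
  ((aestronglyMeasurable_const.indicator₀ hS).const_mul 2).sub aestronglyMeasurable_const

variable [IsProbabilityMeasure μ]

lemma covariance_eq_integral_mul_sub {X Y : Ω → ℝ} {c : ℝ} (hX : AEStronglyMeasurable X μ)
    (hXb : ∀ᵐ ω ∂μ, |X ω| ≤ c) (hY : Integrable Y μ) :
    cov[X, Y; μ] = ∫ ω, X ω * (Y ω - μ[Y]) ∂μ := by
  have hYc : Integrable (fun ω => Y ω - μ[Y]) μ := hY.sub (integrable_const _)
  have hcentered : ∫ ω, (Y ω - μ[Y]) ∂μ = 0 := by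
    rw [integral_sub hY (integrable_const _)]; simp
  simp only [covariance, sub_mul]
  rw [integral_sub (hYc.bdd_mul hX hXb) (hYc.const_mul _), integral_const_mul, hcentered,
    mul_zero, sub_zero]

lemma abs_covariance_le_mul_integral_abs_sub {X Y : Ω → ℝ} {c : ℝ}
    (hX : AEStronglyMeasurable X μ) (hXb : ∀ᵐ ω ∂μ, |X ω| ≤ c) (hY : Integrable Y μ) :
    |cov[X, Y; μ]| ≤ c * ∫ ω, |Y ω - μ[Y]| ∂μ := by
  have hYc : Integrable (fun ω => |Y ω - μ[Y]|) μ := (hY.sub (integrable_const _)).abs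
  rw [covariance_eq_integral_mul_sub hX hXb hY, ← integral_const_mul]
  refine (abs_integral_le_integral_abs).trans (integral_mono_ae ?_ (hYc.const_mul c) ?_)
  · exact ((hY.sub (integrable_const _)).bdd_mul hX hXb).abs
  · filter_upwards [hXb] with ω hω
    rw [abs_mul]
    exact mul_le_mul_of_nonneg_right hω (abs_nonneg _)

lemma integral_abs_sub_eq_covariance_signIndicator {Z : Ω → ℝ} (hZ : Integrable Z μ) :
    ∫ ω, |Z ω - μ[Z]| ∂μ = cov[signIndicator {ω | 0 ≤ Z ω - μ[Z]}, Z; μ] := by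
  have hS : NullMeasurableSet {ω | 0 ≤ Z ω - μ[Z]} μ :=
    nullMeasurableSet_le aemeasurable_const (hZ.aemeasurable.sub_const _)
  rw [covariance_eq_integral_mul_sub (aestronglyMeasurable_signIndicator hS)
    (Eventually.of_forall (abs_signIndicator_le_one _)) hZ]
  simp_rw [signIndicator_mul_self_eq_abs (fun ω => Z ω - μ[Z])]

lemma covariance_signIndicator {A B : Set Ω} (hA : MeasurableSet A) (hB : MeasurableSet B) :
    cov[signIndicator A, signIndicator B; μ] = 4 * (μ.real (A ∩ B) - μ.real A * μ.real B) := by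
  have hmemLp {S : Set Ω} (hS : MeasurableSet S) : MemLp (S.indicator (1 : Ω → ℝ)) 2 μ :=
    memLp_indicator_const 2 hS 1 (Or.inr (measure_ne_top μ S))
  have hcov : cov[A.indicator 1, B.indicator 1; μ] = μ.real (A ∩ B) - μ.real A * μ.real B := by
    rw [covariance_eq_sub (hmemLp hA) (hmemLp hB), ← Set.inter_indicator_one,
      integral_indicator_one (hA.inter hB), integral_indicator_one hA, integral_indicator_one hB]
  have hint {S : Set Ω} (hS : MeasurableSet S) :
      Integrable (fun ω => 2 * S.indicator (1 : Ω → ℝ) ω) μ :=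
    ((integrable_const 1).indicator hS).const_mul 2
  unfold signIndicator
  rw [covariance_sub_const_left (hint hA), covariance_sub_const_right (hint hB),
    covariance_const_mul_left, covariance_const_mul_right, hcov]
  ring

end

section

variable {Ω : Type*} {𝒞 m₀ : MeasurableSpace Ω} {μ : Measure[m₀] Ω} [IsProbabilityMeasure μ]

lemma covariance_condExp_right (h𝒞 : 𝒞 ≤ m₀) {X Y : Ω → ℝ} {c : ℝ}
    (hX : StronglyMeasurable[𝒞] X) (hXb : ∀ᵐ ω ∂μ, |X ω| ≤ c) (hY : Integrable Y μ) :
    cov[X, μ[Y|𝒞]; μ] = cov[X, Y; μ] := by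
  have hX₀ : AEStronglyMeasurable[m₀] X μ := (hX.mono h𝒞).aestronglyMeasurable
  have hYc : Integrable (fun ω => Y ω - μ[Y]) μ := hY.sub (integrable_const _)
  have hcondExp : μ[fun ω => Y ω - μ[Y]|𝒞] =ᵐ[μ] fun ω => μ[Y|𝒞] ω - μ[Y] := by
    filter_upwards [condExp_sub hY (integrable_const (μ[Y])) 𝒞] with ω hω
    rwa [condExp_const h𝒞] at hω
  rw [covariance_eq_integral_mul_sub hX₀ hXb integrable_condExp,
    covariance_eq_integral_mul_sub hX₀ hXb hY, integral_condExp h𝒞,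
    ← integral_condExp h𝒞 (f := fun ω => X ω * (Y ω - μ[Y]))]
  refine integral_congr_ae ?_
  filter_upwards [condExp_stronglyMeasurable_mul_of_bound h𝒞 hX hYc c hXb, hcondExp]
    with ω hmul hsub
  rw [← hsub]
  exact hmul.symm

lemma exists_abs_covariance_le_mul_covariance_signIndicator (h𝒞 : 𝒞 ≤ m₀) {X Y : Ω → ℝ}
    {c : ℝ} (hX : Measurable[𝒞] X) (hXb : ∀ᵐ ω ∂μ, |X ω| ≤ c) (hY : Integrable Y μ) :
    ∃ S, MeasurableSet[𝒞] S ∧ |cov[X, Y; μ]| ≤ c * cov[signIndicator S, Y; μ] := by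
  set Z := μ[Y|𝒞]
  have hZ : StronglyMeasurable[𝒞] Z := stronglyMeasurable_condExp
  have hS : MeasurableSet[𝒞] {ω | 0 ≤ Z ω - μ[Z]} :=
    measurableSet_le measurable_const (hZ.measurable.sub_const _)
  refine ⟨_, hS, ?_⟩
  calc |cov[X, Y; μ]| = |cov[X, Z; μ]| := by
        rw [covariance_condExp_right h𝒞 hX.stronglyMeasurable hXb hY]
    _ ≤ c * ∫ ω, |Z ω - μ[Z]| ∂μ :=
        abs_covariance_le_mul_integral_abs_sub ((hX.mono h𝒞 le_rfl).aestronglyMeasurable) hXb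
          integrable_condExp
    _ = c * cov[signIndicator {ω | 0 ≤ Z ω - μ[Z]}, Y; μ] := by
        rw [integral_abs_sub_eq_covariance_signIndicator integrable_condExp]
        exact congrArg (c * ·) <| covariance_condExp_right h𝒞
          (measurable_signIndicator hS).stronglyMeasurable
          (Eventually.of_forall (abs_signIndicator_le_one _)) hY

end

/-- Covariance inequality for bounded strongly mixing random variables:
if `|X| ≤ C₁`, `|Y| ≤ C₂` a.s., `X` is `𝒜`-measurable, `Y` is `ℬ`-measurable, and the
strong mixing coefficient between `𝒜` and `ℬ` is at most `ε`, then
`|E(XY) − E(X)E(Y)| ≤ 4 C₁ C₂ ε`. -/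
theorem covariance_bound_mixing
    {Ω : Type*} [m : MeasurableSpace Ω] (μ : Measure Ω) [IsProbabilityMeasure μ]
    (𝒜 ℬ : MeasurableSpace Ω) (h𝒜 : 𝒜 ≤ m) (hℬ : ℬ ≤ m)
    (X Y : Ω → ℝ) (hX : Measurable[𝒜] X) (hY : Measurable[ℬ] Y)
    (C₁ C₂ ε : ℝ)
    (hXb : ∀ᵐ ω ∂μ, |X ω| ≤ C₁) (hYb : ∀ᵐ ω ∂μ, |Y ω| ≤ C₂)
    (hmix : ∀ A B : Set Ω, MeasurableSet[𝒜] A → MeasurableSet[ℬ] B →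
      |(μ (A ∩ B)).toReal - (μ A).toReal * (μ B).toReal| ≤ ε) :
    |(∫ ω, X ω * Y ω ∂μ) - (∫ ω, X ω ∂μ) * (∫ ω, Y ω ∂μ)| ≤ 4 * C₁ * C₂ * ε := by
  have hC₁ : 0 ≤ C₁ := (abs_nonneg _).trans hXb.exists.choose_spec
  have hC₂ : 0 ≤ C₂ := (abs_nonneg _).trans hYb.exists.choose_spec
  have hX₀ : AEStronglyMeasurable[m] X μ := (hX.mono h𝒜 le_rfl).aestronglyMeasurable
  have hY₀ : AEStronglyMeasurable[m] Y μ := (hY.mono hℬ le_rfl).aestronglyMeasurable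
  have hcov : cov[X, Y; μ] = (∫ ω, X ω * Y ω ∂μ) - (∫ ω, X ω ∂μ) * (∫ ω, Y ω ∂μ) :=
    covariance_eq_sub (MemLp.of_bound hX₀ C₁ hXb) (MemLp.of_bound hY₀ C₂ hYb)
  rw [← hcov]
  obtain ⟨A, hA, hXY⟩ := exists_abs_covariance_le_mul_covariance_signIndicator h𝒜 hX hXb
    (Integrable.of_bound hY₀ C₂ hYb)
  obtain ⟨B, hB, hYA⟩ := exists_abs_covariance_le_mul_covariance_signIndicator hℬ hY hYb
    (Integrable.of_bound (aestronglyMeasurable_signIndicator (h𝒜 _ hA).nullMeasurableSet) 1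
      (Eventually.of_forall (abs_signIndicator_le_one A)))
  calc |cov[X, Y; μ]| ≤ C₁ * |cov[Y, signIndicator A; μ]| := by
        rw [covariance_comm Y]
        exact hXY.trans (mul_le_mul_of_nonneg_left (le_abs_self _) hC₁)
    _ ≤ C₁ * (C₂ * cov[signIndicator B, signIndicator A; μ]) := by gcongr
    _ = 4 * C₁ * C₂ * (μ.real (A ∩ B) - μ.real A * μ.real B) := by
        rw [covariance_signIndicator (hℬ _ hB) (h𝒜 _ hA), Set.inter_comm]
        ring
    _ ≤ 4 * C₁ * C₂ * ε := by
        gcongr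
        exact (le_abs_self _).trans (hmix A B hA hB)
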